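/- Let I : (0,1) → (0,1) be quasiconcave and satisfy condition (★), and let ‖·‖_X be an r.i. norm with associate norm ‖·‖_{X'}. Then there exist c₁, c₂ > 0 such that for every f ∈ M_+(0,1): c₁·‖R_I f^*‖_{X'} ≤ ‖S_I(R_I f^*)‖_{X'} ≤ c₂·‖R_I f^*‖_{X'}, where (R_I f^*)(t) = (1/I(t))∫_0^t f^*(s) ds. (Equivalently: setting ‖g‖_Z = ‖S_I g‖_{X'}, the associate optimal target norm ‖f‖_{Y_X'} = ‖R_I f^*‖_{X'} satisfies ‖f‖_{Y_X'} ≈ ‖R_I f^*‖_Z, and S_I is bounded on Z.) -/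

import Mathlib

open MeasureTheory Set Filter
open scoped ENNReal

noncomputable section

/-- The nonincreasing rearrangement of `f` over `(0,1)`. -/
def rearr (f : ℝ → ℝ≥0∞) (t : ℝ) : ℝ≥0∞ :=
  sInf {l : ℝ≥0∞ | volume {s ∈ Set.Ioo (0:ℝ) 1 | l < f s} ≤ ENNReal.ofReal t}

/-- The maximal nonincreasing rearrangement `f^{**}(t) = (1/t) ∫_0^t f^*(s) ds`. -/
def dstar (f : ℝ → ℝ≥0∞) (t : ℝ) : ℝ≥0∞ :=
  (ENNReal.ofReal t)⁻¹ * ∫⁻ s in Set.Ioo (0:ℝ) t, rearr f s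

/-- The `L¹(0,1)` norm. -/
def lOne (f : ℝ → ℝ≥0∞) : ℝ≥0∞ := ∫⁻ t in Set.Ioo (0:ℝ) 1, f t

/-- The norm of the Marcinkiewicz-type space `m_I`. -/
def mNorm (I : ℝ → ℝ) (f : ℝ → ℝ≥0∞) : ℝ≥0∞ :=
  ⨆ t ∈ Set.Ioo (0:ℝ) 1, ENNReal.ofReal (I t) * rearr f t

/-- The norm of `m_Ĩ` where `Ĩ(t) = t / I(t)`. -/
def mNormTilde (I : ℝ → ℝ) (f : ℝ → ℝ≥0∞) : ℝ≥0∞ :=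
  ⨆ t ∈ Set.Ioo (0:ℝ) 1, ENNReal.ofReal (t / I t) * rearr f t

/-- The supremum operator `S_I f(t) = (1/I(t)) sup_{0<s≤t} I(s) f^*(s)`. -/
def SI (I : ℝ → ℝ) (f : ℝ → ℝ≥0∞) : ℝ → ℝ≥0∞ := fun t =>
  (ENNReal.ofReal (I t))⁻¹ * ⨆ s ∈ Set.Ioc (0:ℝ) t, ENNReal.ofReal (I s) * rearr f s

/-- The supremum operator `T_I f(t) = (I(t)/t) sup_{t≤s<1} (s/I(s)) f^*(s)`. -/
def TI (I : ℝ → ℝ) (f : ℝ → ℝ≥0∞) : ℝ → ℝ≥0∞ := fun t =>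
  ENNReal.ofReal (I t / t) * ⨆ s ∈ Set.Ico t 1, ENNReal.ofReal (s / I s) * rearr f s

/-- `H_I f(t) = ∫_t^1 f(s)/I(s) ds`. -/
def HI (I : ℝ → ℝ) (f : ℝ → ℝ≥0∞) : ℝ → ℝ≥0∞ := fun t =>
  ∫⁻ s in Set.Ioo t 1, f s / ENNReal.ofReal (I s)

/-- `R_I f(t) = (1/I(t)) ∫_0^t f(s) ds`. -/
def RI (I : ℝ → ℝ) (f : ℝ → ℝ≥0∞) : ℝ → ℝ≥0∞ := fun t =>
  (ENNReal.ofReal (I t))⁻¹ * ∫⁻ s in Set.Ioo (0:ℝ) t, f s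

/-- `I : (0,1) → (0,1)` is quasiconcave: a nondecreasing bijection of `(0,1)` onto `(0,1)`
with `I(t)/t` nonincreasing, `I(0+) = 0` and `I(1-) = 1`. -/
def Quasiconcave (I : ℝ → ℝ) : Prop :=
  Set.BijOn I (Set.Ioo 0 1) (Set.Ioo 0 1) ∧
  MonotoneOn I (Set.Ioo 0 1) ∧
  AntitoneOn (fun t => I t / t) (Set.Ioo 0 1) ∧
  Tendsto I (nhdsWithin 0 (Set.Ioo 0 1)) (nhds 0) ∧
  Tendsto I (nhdsWithin 1 (Set.Ioo 0 1)) (nhds 1)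

/-- Condition (★): `∫_0^t I(s)/s ds ≲ I(t)`. -/
def StarCond (I : ℝ → ℝ) : Prop :=
  ∃ C : ℝ, 0 < C ∧ ∀ t ∈ Set.Ioo (0:ℝ) 1,
    ∫⁻ s in Set.Ioo (0:ℝ) t, ENNReal.ofReal (I s / s) ≤ ENNReal.ofReal (C * I t)

/-- The average property: `∫_0^t ds/I(s) ≲ t/I(t)`. -/
def AvgProp (I : ℝ → ℝ) : Prop :=
  ∃ C : ℝ, 0 < C ∧ ∀ t ∈ Set.Ioo (0:ℝ) 1,
    ∫⁻ s in Set.Ioo (0:ℝ) t, ENNReal.ofReal (1 / I s) ≤ ENNReal.ofReal (C * (t / I t))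

/-- The condition `∫_t^1 I(s)/s² ds ≲ (1/t) ∫_0^t I(s)/s ds`. -/
def MaxCond (I : ℝ → ℝ) : Prop :=
  ∃ C : ℝ, 0 < C ∧ ∀ t ∈ Set.Ioo (0:ℝ) 1,
    ∫⁻ s in Set.Ioo t 1, ENNReal.ofReal (I s / s ^ 2) ≤
      ENNReal.ofReal (C / t) * ∫⁻ s in Set.Ioo (0:ℝ) t, ENNReal.ofReal (I s / s)

/-- The class `𝒬` of quasiconcave functions. -/
def ClassQ (I : ℝ → ℝ) : Prop :=
  Quasiconcave I ∧ StarCond I ∧ AvgProp I ∧ MaxCond I ∧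
  ∃ c d : ℝ,
    IsLUB {l : ℝ | 0 ≤ l ∧ ∀ t ∈ Set.Ioo (0:ℝ) 1,
      ENNReal.ofReal (l * (I t / t ^ 2 - 1)) ≤
        ∫⁻ s in Set.Ioo t 1, ENNReal.ofReal (I s / s ^ 3)} c ∧
    IsLeast {e : ℝ | 0 < e ∧ ∀ t ∈ Set.Ioo (0:ℝ) 1,
      ∫⁻ s in Set.Ioo t 1, ENNReal.ofReal (I s / s ^ 2) ≤
        ENNReal.ofReal (e * (I t / t))} d ∧
    (1 - c) * d ≤ c

/-- The `Δ₂` condition: `I(2t) ≤ C I(t)` for `t ∈ (0,1/2)`. -/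
def Delta2 (I : ℝ → ℝ) : Prop :=
  ∃ C : ℝ, 0 < C ∧ ∀ t ∈ Set.Ioo (0:ℝ) (1/2), I (2 * t) ≤ C * I t

/-- A rearrangement-invariant Banach function norm on `M₊(0,1)`. -/
def IsRiNorm (ρ : (ℝ → ℝ≥0∞) → ℝ≥0∞) : Prop :=
  (∀ f : ℝ → ℝ≥0∞, Measurable f →
      (ρ f = 0 ↔ f =ᵐ[volume.restrict (Set.Ioo (0:ℝ) 1)] 0)) ∧
  (∀ f : ℝ → ℝ≥0∞, Measurable f → ∀ a : ℝ, 0 ≤ a →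
      ρ (fun t => ENNReal.ofReal a * f t) = ENNReal.ofReal a * ρ f) ∧
  (∀ f g : ℝ → ℝ≥0∞, Measurable f → Measurable g →
      ρ (fun t => f t + g t) ≤ ρ f + ρ g) ∧
  (∀ f g : ℝ → ℝ≥0∞, Measurable f → Measurable g →
      (∀ᵐ t ∂(volume.restrict (Set.Ioo (0:ℝ) 1)), f t ≤ g t) → ρ f ≤ ρ g) ∧
  (∀ (fn : ℕ → ℝ → ℝ≥0∞) (f : ℝ → ℝ≥0∞), (∀ n, Measurable (fn n)) → Measurable f →
      (∀ᵐ t ∂(volume.restrict (Set.Ioo (0:ℝ) 1)), Monotone (fun n => fn n t)) →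
      (∀ᵐ t ∂(volume.restrict (Set.Ioo (0:ℝ) 1)), (⨆ n, fn n t) = f t) →
      (⨆ n, ρ (fn n)) = ρ f) ∧
  (ρ (fun _ => 1) < ⊤) ∧
  (∃ c : ℝ, 0 < c ∧ ∀ f : ℝ → ℝ≥0∞, Measurable f →
      ∫⁻ t in Set.Ioo (0:ℝ) 1, f t ≤ ENNReal.ofReal c * ρ f) ∧
  (∀ f : ℝ → ℝ≥0∞, Measurable f → ρ f = ρ (rearr f))

/-- The associate norm `ρ'`. -/
def assoc (ρ : (ℝ → ℝ≥0∞) → ℝ≥0∞) (f : ℝ → ℝ≥0∞) : ℝ≥0∞ :=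
  ⨆ (g : ℝ → ℝ≥0∞) (_ : Measurable g ∧ ρ g ≤ 1),
    ∫⁻ t in Set.Ioo (0:ℝ) 1, f t * g t

/-- The optimal target norm `‖f‖_{Y_X}` of the r.i. norm `ρ = ‖·‖_X` under `H_I`. -/
def optTargetNorm (I : ℝ → ℝ) (ρ : (ℝ → ℝ≥0∞) → ℝ≥0∞) (f : ℝ → ℝ≥0∞) : ℝ≥0∞ :=
  ⨆ (g : ℝ → ℝ≥0∞) (_ : Measurable g ∧ assoc ρ (RI I (rearr g)) ≤ 1),
    ∫⁻ t in Set.Ioo (0:ℝ) 1, rearr f t * rearr g t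

/-- The optimal domain norm `‖f‖_{X_Y} = sup_{h ∼ f} ‖H_I h‖_Y`. -/
def optDomainNorm (I : ℝ → ℝ) (ρY : (ℝ → ℝ≥0∞) → ℝ≥0∞) (f : ℝ → ℝ≥0∞) : ℝ≥0∞ :=
  ⨆ (h : ℝ → ℝ≥0∞)
    (_ : Measurable h ∧ ∀ t ∈ Set.Ioo (0:ℝ) 1, rearr h t = rearr f t),
      ρY (HI I h)

/-- `H_I : X → Y` boundedly. -/
def HIBounded (I : ℝ → ℝ) (ρX ρY : (ℝ → ℝ≥0∞) → ℝ≥0∞) : Prop :=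
  ∃ C : ℝ, 0 < C ∧ ∀ f : ℝ → ℝ≥0∞, Measurable f →
    ρY (HI I f) ≤ ENNReal.ofReal C * ρX f

/-- `X` is the optimal domain space for `Y` under `H_I`. -/
def IsOptimalDomain (I : ℝ → ℝ) (ρX ρY : (ℝ → ℝ≥0∞) → ℝ≥0∞) : Prop :=
  HIBounded I ρX ρY ∧
  ∀ ρZ : (ℝ → ℝ≥0∞) → ℝ≥0∞, IsRiNorm ρZ → HIBounded I ρZ ρY →
    ∃ C : ℝ, 0 < C ∧ ∀ f : ℝ → ℝ≥0∞, Measurable f →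
      ρX f ≤ ENNReal.ofReal C * ρZ f

/-- `Y` is the optimal target space for `X` under `H_I`. -/
def IsOptimalTarget (I : ℝ → ℝ) (ρX ρY : (ℝ → ℝ≥0∞) → ℝ≥0∞) : Prop :=
  HIBounded I ρX ρY ∧
  ∀ ρZ : (ℝ → ℝ≥0∞) → ℝ≥0∞, IsRiNorm ρZ → HIBounded I ρX ρZ →
    ∃ C : ℝ, 0 < C ∧ ∀ f : ℝ → ℝ≥0∞, Measurable f →
      ρZ f ≤ ENNReal.ofReal C * ρY f


/-!
Write `G = R_I f^*`. Since `G^* ≤ S_I G` pointwise, the Hardy–Littlewood inequality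
`∫ G g ≤ ∫ G^* g^*` gives the lower bound with `c₁ = 1`.

For the upper bound, `S_I G` lies below the nonincreasing majorant `Ḡ(t) = sup_{t ≤ x < 1} G(x)`,
and the quasiconcavity of `I` (`I` nondecreasing, `I(t)/t` nonincreasing) yields
`∫_0^e Ḡ ≤ 9 ∫_0^e G^*` for every `e`. Such a domination of primitives passes to the associate
norm: slice a test function `g` of the unit ball of `X` into its level sets `{g > l}` (layer cake),
bound `∫_{g > l} Ḡ` by `∫_0^{|{g > l}|} Ḡ ≤ 9 ∫_0^{|{g > l}|} G^*`, and realise the last integral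
as `∫_{E} G` over a set `E` of the same measure. These sets can be chosen nested in `l`, so
stacking them yields a function `Ψ` with `|{Ψ > l}| ≤ |{g > l}|`, i.e. `‖Ψ‖_X ≤ ‖g‖_X ≤ 1`,
and `∫ Ḡ g ≤ 9 ∫ G Ψ ≤ 9 ‖G‖_{X'}`.
-/
namespace Rearrangement

def distribution (u : ℝ → ℝ≥0∞) (l : ℝ≥0∞) : ℝ≥0∞ :=
  volume {s ∈ Ioo (0:ℝ) 1 | l < u s}

section Distribution

variable {u w : ℝ → ℝ≥0∞}

lemma rearr_eq_sInf (u : ℝ → ℝ≥0∞) (t : ℝ) :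
    rearr u t = sInf {l | distribution u l ≤ ENNReal.ofReal t} := rfl

lemma distribution_anti (u : ℝ → ℝ≥0∞) : Antitone (distribution u) :=
  fun _ _ h => measure_mono fun _ hx => ⟨hx.1, h.trans_lt hx.2⟩

lemma distribution_le_one (u : ℝ → ℝ≥0∞) (l : ℝ≥0∞) : distribution u l ≤ 1 :=
  (measure_mono fun _ hx => hx.1).trans_eq (by simp [Real.volume_Ioo])

lemma distribution_ne_top (u : ℝ → ℝ≥0∞) (l : ℝ≥0∞) : distribution u l ≠ ⊤ :=
  ne_top_of_le_ne_top ENNReal.one_ne_top (distribution_le_one u l)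

lemma distribution_top (u : ℝ → ℝ≥0∞) : distribution u ⊤ = 0 := by
  simp [distribution]

lemma exists_gt_lt_distribution {r l : ℝ≥0∞} (h : r < distribution u l) :
    ∃ l' > l, r < distribution u l' := by
  have hl : l ≠ ⊤ := by rintro rfl; simp [distribution_top] at h
  have hU : {s ∈ Ioo (0:ℝ) 1 | l < u s} =
      ⋃ n : ℕ, {s ∈ Ioo (0:ℝ) 1 | l + (n : ℝ≥0∞)⁻¹ < u s} := by
    ext s
    simp only [mem_ofPred_eq, mem_iUnion]
    constructor
    · rintro ⟨hs, hlt⟩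
      obtain ⟨r, hr0, hr⟩ := ENNReal.lt_iff_exists_add_pos_lt.mp hlt
      obtain ⟨n, hn⟩ := ENNReal.exists_inv_nat_lt (ENNReal.coe_ne_zero.mpr hr0.ne')
      exact ⟨n, hs, (add_le_add le_rfl hn.le).trans_lt hr⟩
    · rintro ⟨n, hs, hlt⟩
      exact ⟨hs, le_self_add.trans_lt hlt⟩
  have hmono : Monotone fun n : ℕ => {s ∈ Ioo (0:ℝ) 1 | l + (n : ℝ≥0∞)⁻¹ < u s} :=
    fun n m hnm s hs => ⟨hs.1, (add_le_add le_rfl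
      (ENNReal.inv_le_inv.mpr (Nat.cast_le.mpr hnm))).trans_lt hs.2⟩
  rw [distribution, hU, hmono.measure_iUnion] at h
  obtain ⟨n, hn⟩ := lt_iSup_iff.mp h
  exact ⟨l + (n : ℝ≥0∞)⁻¹, ENNReal.lt_add_right hl (by simp), hn⟩

lemma lt_rearr_iff {l : ℝ≥0∞} {t : ℝ} :
    l < rearr u t ↔ ENNReal.ofReal t < distribution u l := by
  constructor
  · intro h
    by_contra! hle
    exact (sInf_le (s := {l | distribution u l ≤ ENNReal.ofReal t}) hle).not_gt h
  · intro h
    obtain ⟨l', hll', hl'⟩ := exists_gt_lt_distribution h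
    refine hll'.trans_le (le_sInf fun m hm => ?_)
    by_contra! hml
    exact (hl'.trans_le (distribution_anti u hml.le)).not_ge hm

lemma rearr_le_iff {l : ℝ≥0∞} {t : ℝ} :
    rearr u t ≤ l ↔ distribution u l ≤ ENNReal.ofReal t := by
  simpa only [not_lt] using lt_rearr_iff.not

lemma distribution_rearr_le (u : ℝ → ℝ≥0∞) (t : ℝ) :
    distribution u (rearr u t) ≤ ENNReal.ofReal t :=
  rearr_le_iff.mp le_rfl

lemma rearr_antitone (u : ℝ → ℝ≥0∞) : Antitone (rearr u) :=
  fun _ _ h => le_sInf fun _ hl => sInf_le (hl.trans (ENNReal.ofReal_le_ofReal h))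

lemma measurable_rearr (u : ℝ → ℝ≥0∞) : Measurable (rearr u) :=
  (rearr_antitone u).measurable

lemma rearr_le_rearr_of_distribution_le (h : ∀ l, distribution u l ≤ distribution w l)
    (t : ℝ) : rearr u t ≤ rearr w t :=
  rearr_le_iff.mpr ((h _).trans (distribution_rearr_le w t))

lemma rearr_congr (h : ∀ x ∈ Ioo (0:ℝ) 1, u x = w x) : rearr u = rearr w := by
  have hd : distribution u = distribution w := by
    ext1 l
    refine congrArg volume (Set.ext fun x => and_congr_right fun hx => ?_)
    rw [h x hx]
  funext t
  simp only [rearr_eq_sInf, hd]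

lemma rearr_le_of_forall_le {c : ℝ≥0∞} {s : ℝ}
    (h : ∀ x ∈ Ioo (0:ℝ) 1, s ≤ x → u x ≤ c) : rearr u s ≤ c := by
  refine rearr_le_iff.mpr (calc
    distribution u c ≤ volume (Ioo 0 s) := measure_mono fun x hx => ⟨hx.1.1, ?_⟩
    _ = ENNReal.ofReal s := by rw [Real.volume_Ioo, sub_zero])
  by_contra! hsx
  exact (h x hx.1 hsx).not_gt hx.2

lemma Ioo_inter_lt_rearr (u : ℝ → ℝ≥0∞) (l : ℝ≥0∞) (c : ℝ) :
    Ioo 0 c ∩ {s | l < rearr u s} = Ioo 0 (min c (distribution u l).toReal) := by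
  ext s
  simp only [mem_inter_iff, mem_Ioo, mem_ofPred_eq, lt_rearr_iff, lt_min_iff]
  constructor
  · rintro ⟨⟨hs0, hsc⟩, hs⟩
    exact ⟨hs0, hsc, (ENNReal.ofReal_lt_iff_lt_toReal hs0.le (distribution_ne_top u l)).mp hs⟩
  · rintro ⟨hs0, hsc, hs⟩
    exact ⟨⟨hs0, hsc⟩, (ENNReal.ofReal_lt_iff_lt_toReal hs0.le (distribution_ne_top u l)).mpr hs⟩

lemma volume_Ioo_inter_lt_rearr (u : ℝ → ℝ≥0∞) (l : ℝ≥0∞) (c : ℝ) :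
    volume (Ioo 0 c ∩ {s | l < rearr u s}) = min (ENNReal.ofReal c) (distribution u l) := by
  rw [Ioo_inter_lt_rearr, Real.volume_Ioo, sub_zero, ENNReal.ofReal_min,
    ENNReal.ofReal_toReal (distribution_ne_top u l)]

end Distribution

section LayerCake

variable {u w : ℝ → ℝ≥0∞}

lemma volume_Ioi_inter_ofReal_lt (c : ℝ≥0∞) :
    volume (Ioi (0:ℝ) ∩ {l | ENNReal.ofReal l < c}) = c := by
  rcases eq_or_ne c ⊤ with rfl | hc
  · simp [Real.volume_Ioi]
  · have : Ioi (0:ℝ) ∩ {l | ENNReal.ofReal l < c} = Ioo 0 c.toReal := by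
      ext l
      simp only [mem_inter_iff, mem_Ioi, mem_ofPred_eq, mem_Ioo, and_congr_right_iff]
      exact fun hl => ENNReal.ofReal_lt_iff_lt_toReal hl.le hc
    rw [this, Real.volume_Ioo, sub_zero, ENNReal.ofReal_toReal hc]

theorem setLIntegral_mul_eq_lintegral_setLIntegral (hu : Measurable u) (hw : Measurable w)
    (A : Set ℝ) :
    ∫⁻ x in A, u x * w x =
      ∫⁻ l in Ioi (0:ℝ), ∫⁻ x in A ∩ {x | ENNReal.ofReal l < w x}, u x := by
  set F : ℝ → ℝ → ℝ≥0∞ := fun l x => {x | ENNReal.ofReal l < w x}.indicator u x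
  have hF : Measurable (Function.uncurry F) :=
    (hu.comp measurable_snd).indicator
      (measurableSet_lt (ENNReal.measurable_ofReal.comp measurable_fst) (hw.comp measurable_snd))
  have inner_l : ∀ x, ∫⁻ l in Ioi (0:ℝ), F l x = u x * w x := by
    intro x
    have hS : MeasurableSet {l : ℝ | ENNReal.ofReal l < w x} :=
      measurableSet_lt ENNReal.measurable_ofReal measurable_const
    have : ∀ l, F l x = {l : ℝ | ENNReal.ofReal l < w x}.indicator (fun _ => u x) l := by
      intro l
      by_cases hl : ENNReal.ofReal l < w x <;> simp [F, hl]
    simp_rw [this, lintegral_indicator hS, Measure.restrict_restrict hS, setLIntegral_const,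
      inter_comm, volume_Ioi_inter_ofReal_lt]
  have inner_x : ∀ l, ∫⁻ x in A, F l x = ∫⁻ x in A ∩ {x | ENNReal.ofReal l < w x}, u x := by
    intro l
    have hS : MeasurableSet {x | ENNReal.ofReal l < w x} := measurableSet_lt measurable_const hw
    rw [lintegral_indicator hS, Measure.restrict_restrict hS, inter_comm]
  simp_rw [← inner_l, ← inner_x]
  exact (lintegral_lintegral_swap hF.aemeasurable).symm

theorem setLIntegral_eq_lintegral_volume (hu : Measurable u) (A : Set ℝ) :
    ∫⁻ x in A, u x = ∫⁻ l in Ioi (0:ℝ), volume (A ∩ {x | ENNReal.ofReal l < u x}) := by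
  simpa using setLIntegral_mul_eq_lintegral_setLIntegral (u := fun _ => 1) measurable_const hu A

theorem setLIntegral_le_setLIntegral_rearr (hu : Measurable u) {E : Set ℝ} (hE1 : E ⊆ Ioo 0 1) :
    ∫⁻ x in E, u x ≤ ∫⁻ s in Ioo 0 (volume E).toReal, rearr u s := by
  have hEtop : volume E ≠ ⊤ := measure_ne_top_of_subset hE1 (by simp [Real.volume_Ioo])
  rw [setLIntegral_eq_lintegral_volume hu, setLIntegral_eq_lintegral_volume (measurable_rearr u)]
  refine lintegral_mono fun l => ?_
  rw [volume_Ioo_inter_lt_rearr, ENNReal.ofReal_toReal hEtop]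
  exact le_min (measure_mono inter_subset_left)
    (measure_mono fun x hx => ⟨hE1 hx.1, hx.2⟩)

theorem setLIntegral_mul_le_rearr_mul_rearr (hu : Measurable u) (hw : Measurable w) :
    ∫⁻ x in Ioo (0:ℝ) 1, u x * w x ≤ ∫⁻ x in Ioo (0:ℝ) 1, rearr u x * rearr w x := by
  rw [setLIntegral_mul_eq_lintegral_setLIntegral hu hw,
    setLIntegral_mul_eq_lintegral_setLIntegral (measurable_rearr u) (measurable_rearr w)]
  refine lintegral_mono fun l => ?_
  calc ∫⁻ x in Ioo 0 1 ∩ {x | ENNReal.ofReal l < w x}, u x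
      ≤ ∫⁻ s in Ioo 0 (distribution w (ENNReal.ofReal l)).toReal, rearr u s :=
        setLIntegral_le_setLIntegral_rearr hu inter_subset_left
    _ = ∫⁻ s in Ioo 0 1 ∩ {x | ENNReal.ofReal l < rearr w x}, rearr u s := by
        rw [Ioo_inter_lt_rearr, min_eq_right]
        exact ENNReal.toReal_le_of_le_ofReal zero_le_one
          ((distribution_le_one w _).trans_eq ENNReal.ofReal_one.symm)

lemma setLIntegral_Ioo_le_of_forall_lt {h : ℝ → ℝ≥0∞} {b : ℝ} {c : ℝ≥0∞}
    (H : ∀ e < b, ∫⁻ s in Ioo 0 e, h s ≤ c) : ∫⁻ s in Ioo 0 b, h s ≤ c := by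
  have hU : Ioo (0:ℝ) b = ⋃ n : ℕ, Ioo 0 (b - 1 / (n + 1)) := by
    ext x
    simp only [mem_Ioo, mem_iUnion]
    constructor
    · rintro ⟨hx0, hxb⟩
      obtain ⟨n, hn⟩ := exists_nat_one_div_lt (sub_pos.mpr hxb)
      exact ⟨n, hx0, by linarith⟩
    · rintro ⟨n, hx0, hxn⟩
      exact ⟨hx0, hxn.trans (sub_lt_self b Nat.one_div_pos_of_nat)⟩
  have hmono : Monotone fun n : ℕ => Ioo (0:ℝ) (b - 1 / (n + 1)) := fun n m hnm =>
    Ioo_subset_Ioo_right (sub_le_sub_left (Nat.one_div_le_one_div hnm) b)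
  rw [← withDensity_apply _ measurableSet_Ioo, hU, hmono.measure_iUnion]
  exact iSup_le fun n => (withDensity_apply _ measurableSet_Ioo).trans_le
    (H _ (sub_lt_self b Nat.one_div_pos_of_nat))

end LayerCake

section Attain

def cutoff (P : Set ℝ) (m : ℝ≥0∞) : ℝ := sSup {τ ∈ Icc (0:ℝ) 1 | volume (P ∩ Iio τ) ≤ m}

variable {P : Set ℝ} {m : ℝ≥0∞}

lemma volume_inter_Iio_le_add (P : Set ℝ) (τ τ' : ℝ) :
    volume (P ∩ Iio τ') ≤ volume (P ∩ Iio τ) + ENNReal.ofReal (τ' - τ) :=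
  calc volume (P ∩ Iio τ') ≤ volume (P ∩ Iio τ ∪ Ico τ τ') :=
        measure_mono fun x ⟨hxP, hx⟩ => (lt_or_ge x τ).imp (fun h => ⟨hxP, h⟩) fun h => ⟨h, hx⟩
    _ ≤ _ := (measure_union_le _ _).trans_eq (by rw [Real.volume_Ico])

lemma zero_mem_cutoffSet (hP : P ⊆ Ioo 0 1) (m : ℝ≥0∞) :
    (0:ℝ) ∈ {τ ∈ Icc (0:ℝ) 1 | volume (P ∩ Iio τ) ≤ m} := by
  refine ⟨⟨le_rfl, zero_le_one⟩, ?_⟩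
  rw [show P ∩ Iio 0 = ∅ from eq_empty_of_forall_notMem fun x hx => (hP hx.1).1.not_gt hx.2,
    measure_empty]
  exact zero_le

lemma cutoff_nonneg (hP : P ⊆ Ioo 0 1) (m : ℝ≥0∞) : 0 ≤ cutoff P m :=
  le_csSup ⟨1, fun _ hτ => hτ.1.2⟩ (zero_mem_cutoffSet hP m)

lemma cutoff_mono (hP : P ⊆ Ioo 0 1) : Monotone (cutoff P) := fun m _ h =>
  csSup_le_csSup ⟨1, fun _ hτ => hτ.1.2⟩ ⟨0, zero_mem_cutoffSet hP m⟩
    fun _ hτ => ⟨hτ.1, hτ.2.trans h⟩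

theorem volume_inter_Iio_cutoff (hP : P ⊆ Ioo 0 1) (hm : m ≤ volume P) :
    volume (P ∩ Iio (cutoff P m)) = m := by
  have hbdd : BddAbove {τ ∈ Icc (0:ℝ) 1 | volume (P ∩ Iio τ) ≤ m} := ⟨1, fun _ hτ => hτ.1.2⟩
  apply le_antisymm
  · refine ENNReal.le_of_forall_pos_le_add fun ε hε _ => ?_
    obtain ⟨τ, hτ, hτlt⟩ := exists_lt_of_lt_csSup ⟨0, zero_mem_cutoffSet hP m⟩
      (sub_lt_self (cutoff P m) (NNReal.coe_pos.mpr hε))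
    calc volume (P ∩ Iio (cutoff P m))
        ≤ volume (P ∩ Iio τ) + ENNReal.ofReal (cutoff P m - τ) := volume_inter_Iio_le_add P _ _
      _ ≤ m + ε := add_le_add hτ.2 (ENNReal.ofReal_le_of_le_toReal (by simp; linarith))
  · refine ENNReal.le_of_forall_pos_le_add fun ε hε _ => ?_
    set τ := cutoff P m + ε
    have hτ : m ≤ volume (P ∩ Iio τ) := by
      by_cases hτ1 : τ ≤ 1
      · by_contra! hlt
        have : τ ≤ cutoff P m := le_csSup hbdd
          ⟨⟨(cutoff_nonneg hP m).trans (le_add_of_nonneg_right ε.2), hτ1⟩, hlt.le⟩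
        linarith [NNReal.coe_pos.mpr hε]
      · rwa [inter_eq_left.mpr fun x hx => mem_Iio.mpr ((hP hx).2.trans (not_le.mp hτ1))]
    calc m ≤ volume (P ∩ Iio τ) := hτ
      _ ≤ volume (P ∩ Iio (cutoff P m)) + ENNReal.ofReal (τ - cutoff P m) :=
        volume_inter_Iio_le_add P _ _
      _ = _ := by simp [τ]

variable {v : ℝ → ℝ≥0∞} {a b : ℝ}

def plateau (v : ℝ → ℝ≥0∞) (a : ℝ) : Set ℝ := {x ∈ Ioo (0:ℝ) 1 | v x = rearr v a}

/-- The superlevel set `{v > v*(a)}`, of measure at most `a`, completed by an initial piece of the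
plateau `{v = v*(a)}` to a set of measure exactly `a`; these sets increase with `a`. -/
def attainSet (v : ℝ → ℝ≥0∞) (a : ℝ) : Set ℝ :=
  {x ∈ Ioo (0:ℝ) 1 | rearr v a < v x} ∪
    plateau v a ∩ Iio (cutoff (plateau v a) (ENNReal.ofReal a - distribution v (rearr v a)))

lemma plateau_subset (v : ℝ → ℝ≥0∞) (a : ℝ) : plateau v a ⊆ Ioo 0 1 := fun _ hx => hx.1

lemma attainSet_subset (v : ℝ → ℝ≥0∞) (a : ℝ) : attainSet v a ⊆ Ioo 0 1 :=
  union_subset (fun _ hx => hx.1) fun _ hx => hx.1.1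

lemma measurableSet_plateau (hv : Measurable v) (a : ℝ) : MeasurableSet (plateau v a) :=
  measurableSet_Ioo.inter (hv (measurableSet_singleton _))

lemma measurableSet_attainSet (hv : Measurable v) (a : ℝ) : MeasurableSet (attainSet v a) :=
  (measurableSet_Ioo.inter (measurableSet_lt measurable_const hv)).union
    ((measurableSet_plateau hv a).inter measurableSet_Iio)

lemma rearr_le_of_mem_attainSet {x : ℝ} (hx : x ∈ attainSet v a) : rearr v a ≤ v x := by
  rcases hx with hx | hx
  · exact hx.2.le
  · exact hx.1.2.ge

lemma ofReal_le_volume_rearr_le (hv : Measurable v) (ha : a ≤ 1) :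
    ENNReal.ofReal a ≤ volume {x ∈ Ioo (0:ℝ) 1 | rearr v a ≤ v x} := by
  rcases eq_zero_or_pos (rearr v a) with h0 | hpos
  · simp only [h0, zero_le, and_true, ofPred_mem_eq, Real.volume_Ioo, sub_zero]
    exact ENNReal.ofReal_le_ofReal ha
  obtain ⟨l, hl_mono, hl_mem, hl_lim⟩ := exists_seq_strictMono_tendsto' hpos
  have hanti : Antitone fun n => {x ∈ Ioo (0:ℝ) 1 | l n < v x} :=
    fun n m hnm x hx => ⟨hx.1, (hl_mono.monotone hnm).trans_lt hx.2⟩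
  calc ENNReal.ofReal a ≤ ⨅ n, distribution v (l n) :=
        le_iInf fun n => (lt_rearr_iff.mp (hl_mem n).2).le
    _ = volume (⋂ n, {x ∈ Ioo (0:ℝ) 1 | l n < v x}) :=
        (hanti.measure_iInter (fun n => (measurableSet_Ioo.inter
          (measurableSet_lt measurable_const hv)).nullMeasurableSet)
          ⟨0, distribution_ne_top v _⟩).symm
    _ ≤ volume {x ∈ Ioo (0:ℝ) 1 | rearr v a ≤ v x} := measure_mono fun x hx =>
        ⟨(mem_iInter.mp hx 0).1, le_of_tendsto' hl_lim fun n => (mem_iInter.mp hx n).2.le⟩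

theorem volume_attainSet (hv : Measurable v) (ha : a ≤ 1) :
    volume (attainSet v a) = ENNReal.ofReal a := by
  have hdisj : ∀ Q ⊆ plateau v a, Disjoint {x ∈ Ioo (0:ℝ) 1 | rearr v a < v x} Q :=
    fun Q hQ => disjoint_left.mpr fun x hx hxQ => hx.2.ne' (hQ hxQ).2
  have hle : volume {x ∈ Ioo (0:ℝ) 1 | rearr v a ≤ v x}
      = distribution v (rearr v a) + volume (plateau v a) := by
    rw [distribution, ← measure_union (hdisj _ subset_rfl) (measurableSet_plateau hv a)]
    congr 1
    ext x
    simp only [plateau, mem_union, mem_ofPred_eq, le_iff_lt_or_eq, eq_comm (a := v x)]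
    tauto
  have hm : ENNReal.ofReal a - distribution v (rearr v a) ≤ volume (plateau v a) := by
    rw [tsub_le_iff_left, ← hle]
    exact ofReal_le_volume_rearr_le hv ha
  rw [attainSet, measure_union (hdisj _ inter_subset_left)
    ((measurableSet_plateau hv a).inter measurableSet_Iio),
    volume_inter_Iio_cutoff (plateau_subset v a) hm]
  exact add_tsub_cancel_of_le (distribution_rearr_le v a)

theorem attainSet_mono (hab : a ≤ b) : attainSet v a ⊆ attainSet v b := by
  rcases (rearr_antitone v hab).lt_or_eq with hlt | heq
  · exact fun x hx => Or.inl ⟨attainSet_subset v a hx, hlt.trans_le (rearr_le_of_mem_attainSet hx)⟩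
  · have hP : plateau v a = plateau v b := by simp only [plateau, heq]
    refine union_subset_union (fun x hx => ⟨hx.1, heq ▸ hx.2⟩) ?_
    rw [hP, heq]
    refine inter_subset_inter_right _ (Iio_subset_Iio (cutoff_mono (plateau_subset v b) ?_))
    exact tsub_le_tsub_right (ENNReal.ofReal_le_ofReal hab) _

theorem setLIntegral_rearr_le_setLIntegral_attainSet (hv : Measurable v) (ha : a ≤ 1) :
    ∫⁻ s in Ioo 0 a, rearr v s ≤ ∫⁻ x in attainSet v a, v x := by
  rw [setLIntegral_eq_lintegral_volume (measurable_rearr v), setLIntegral_eq_lintegral_volume hv]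
  refine lintegral_mono fun l => ?_
  rw [volume_Ioo_inter_lt_rearr]
  rcases le_or_gt (rearr v a) (ENNReal.ofReal l) with hl | hl
  · exact (min_le_right _ _).trans (measure_mono fun x hx =>
      ⟨Or.inl ⟨hx.1, hl.trans_lt hx.2⟩, hx.2⟩)
  · rw [inter_eq_left.mpr (show attainSet v a ⊆ {x | ENNReal.ofReal l < v x} from
      fun x hx => hl.trans_le (rearr_le_of_mem_attainSet hx)),
      volume_attainSet hv ha]
    exact min_le_left _ _

end Attain

section TestFunction

variable {u v k : ℝ → ℝ≥0∞}

def levelLen (k : ℝ → ℝ≥0∞) (l : ℝ) : ℝ := (distribution k (ENNReal.ofReal l)).toReal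

/-- The intersection over rationals makes `levelSet v k l` left-continuous in `l`, hence jointly
measurable in `(l, x)`, while still containing `attainSet v (levelLen k l)`. -/
def levelSet (v k : ℝ → ℝ≥0∞) (l : ℝ) : Set ℝ :=
  ⋂ (q : ℚ) (_ : 0 < (q:ℝ) ∧ (q:ℝ) < l), attainSet v (levelLen k q)

/-- Stacking the nested sets `levelSet v k l`, essentially `attainSet v |{k > l}|`, gives a
function dominated by `k` in distribution. -/
def testFun (v k : ℝ → ℝ≥0∞) (x : ℝ) : ℝ≥0∞ :=
  ∫⁻ l in Ioi (0:ℝ), (levelSet v k l).indicator 1 x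

lemma ofReal_levelLen (k : ℝ → ℝ≥0∞) (l : ℝ) :
    ENNReal.ofReal (levelLen k l) = distribution k (ENNReal.ofReal l) :=
  ENNReal.ofReal_toReal (distribution_ne_top k _)

lemma levelLen_le_one (k : ℝ → ℝ≥0∞) (l : ℝ) : levelLen k l ≤ 1 :=
  ENNReal.toReal_le_of_le_ofReal zero_le_one
    ((distribution_le_one k _).trans_eq ENNReal.ofReal_one.symm)

lemma levelLen_anti (k : ℝ → ℝ≥0∞) : Antitone (levelLen k) := fun _ _ h =>
  ENNReal.toReal_mono (distribution_ne_top k _)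
    (distribution_anti k (ENNReal.ofReal_le_ofReal h))

lemma attainSet_levelLen_anti {l l' : ℝ} (h : l ≤ l') :
    attainSet v (levelLen k l') ⊆ attainSet v (levelLen k l) :=
  attainSet_mono (levelLen_anti k h)

lemma attainSet_subset_levelSet (l : ℝ) : attainSet v (levelLen k l) ⊆ levelSet v k l :=
  subset_iInter₂ fun _ hq => attainSet_levelLen_anti hq.2.le

lemma levelSet_subset {l : ℝ} (hl : 0 < l) : levelSet v k l ⊆ Ioo 0 1 := by
  obtain ⟨q, hq0, hql⟩ := exists_rat_btwn hl
  exact (iInter₂_subset q ⟨hq0, hql⟩).trans (attainSet_subset v _)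

lemma measurableSet_levelSet (hv : Measurable v) (l : ℝ) : MeasurableSet (levelSet v k l) :=
  .iInter fun _ => .iInter fun _ => measurableSet_attainSet hv _

lemma measurableSet_setOf_mem_levelSet (hv : Measurable v) :
    MeasurableSet {p : ℝ × ℝ | p.2 ∈ levelSet v k p.1} := by
  have : {p : ℝ × ℝ | p.2 ∈ levelSet v k p.1} = ⋂ q : ℚ,
      {p : ℝ × ℝ | 0 < (q:ℝ) ∧ (q:ℝ) < p.1 → p.2 ∈ attainSet v (levelLen k q)} := by
    ext p
    simp [levelSet]
  rw [this]
  exact .iInter fun q => ((MeasurableSet.const _).inter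
    (measurableSet_lt measurable_const measurable_fst)).imp
    (measurable_snd (measurableSet_attainSet hv _))

lemma measurable_indicator_levelSet (hv : Measurable v) :
    Measurable (Function.uncurry fun l x => (levelSet v k l).indicator (1 : ℝ → ℝ≥0∞) x) :=
  measurable_const.indicator (measurableSet_setOf_mem_levelSet hv)

lemma measurable_testFun (hv : Measurable v) : Measurable (testFun v k) :=
  Measurable.lintegral_prod_right' ((measurable_indicator_levelSet hv).comp measurable_swap)

lemma testFun_le_of_forall_notMem {x c : ℝ} (h : ∀ l, c < l → x ∉ levelSet v k l) :
    testFun v k x ≤ ENNReal.ofReal c := by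
  calc testFun v k x ≤ ∫⁻ l in Ioi (0:ℝ), (Iic c).indicator 1 l := by
        refine lintegral_mono fun l => ?_
        by_cases hx : x ∈ levelSet v k l
        · rw [indicator_of_mem hx,
            indicator_of_mem (show l ∈ Iic c from not_lt.mp fun hl => h l hl hx), Pi.one_apply,
            Pi.one_apply]
        · rw [indicator_of_notMem hx]
          exact zero_le
    _ = ENNReal.ofReal c := by
        rw [lintegral_indicator_one measurableSet_Iic, Measure.restrict_apply measurableSet_Iic,
          Iic_inter_Ioi, Real.volume_Ioc, sub_zero]

theorem distribution_testFun_le (hv : Measurable v) (l : ℝ≥0∞) :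
    distribution (testFun v k) l ≤ distribution k l := by
  rcases eq_or_ne l ⊤ with rfl | hl
  · simp [distribution_top]
  set c := l.toReal
  have hsub : {x ∈ Ioo (0:ℝ) 1 | l < testFun v k x} ⊆ attainSet v (levelLen k c) := by
    rintro x ⟨-, hx⟩
    obtain ⟨l', hcl', hx'⟩ : ∃ l', c < l' ∧ x ∈ levelSet v k l' := by
      by_contra! h
      exact (testFun_le_of_forall_notMem h).not_gt (by rwa [ENNReal.ofReal_toReal hl])
    obtain ⟨q, hcq, hql'⟩ := exists_rat_btwn hcl'
    exact attainSet_levelLen_anti hcq.le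
      (mem_iInter₂.mp hx' q ⟨ENNReal.toReal_nonneg.trans_lt hcq, hql'⟩)
  calc distribution (testFun v k) l ≤ volume (attainSet v (levelLen k c)) := measure_mono hsub
    _ = distribution k l := by
      rw [volume_attainSet hv (levelLen_le_one k c), ofReal_levelLen, ENNReal.ofReal_toReal hl]

theorem lintegral_setLIntegral_levelSet (hv : Measurable v) :
    ∫⁻ l in Ioi (0:ℝ), ∫⁻ x in levelSet v k l, v x
      = ∫⁻ x in Ioo (0:ℝ) 1, v x * testFun v k x := by
  have hset : ∀ l ∈ Ioi (0:ℝ), ∫⁻ x in levelSet v k l, v x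
      = ∫⁻ x in Ioo (0:ℝ) 1, (levelSet v k l).indicator 1 x * v x := by
    intro l hl
    simp_rw [← indicator_mul_left, Pi.one_apply, one_mul]
    rw [lintegral_indicator (measurableSet_levelSet hv l),
      Measure.restrict_restrict (measurableSet_levelSet hv l),
      inter_eq_left.mpr (levelSet_subset hl)]
  rw [setLIntegral_congr_fun measurableSet_Ioi hset, lintegral_lintegral_swap
    ((measurable_indicator_levelSet hv).mul (hv.comp measurable_snd)).aemeasurable]
  refine lintegral_congr fun x => ?_
  have hx : Measurable fun l => (levelSet v k l).indicator (1 : ℝ → ℝ≥0∞) x :=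
    (measurable_indicator_levelSet hv).comp measurable_prodMk_right
  rw [lintegral_mul_const _ hx, mul_comm]
  rfl

theorem setLIntegral_mul_le_mul_setLIntegral_mul_testFun (hu : Measurable u) (hv : Measurable v)
    (hk : Measurable k) {C : ℝ≥0∞} (hC : C ≠ ⊤)
    (h : ∀ e ≤ 1, ∫⁻ s in Ioo 0 e, rearr u s ≤ C * ∫⁻ s in Ioo 0 e, rearr v s) :
    ∫⁻ x in Ioo (0:ℝ) 1, u x * k x ≤ C * ∫⁻ x in Ioo (0:ℝ) 1, v x * testFun v k x := by
  rw [setLIntegral_mul_eq_lintegral_setLIntegral hu hk, ← lintegral_setLIntegral_levelSet hv,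
    ← lintegral_const_mul' _ _ hC]
  refine lintegral_mono fun l => ?_
  calc ∫⁻ x in Ioo 0 1 ∩ {x | ENNReal.ofReal l < k x}, u x
      ≤ ∫⁻ s in Ioo 0 (levelLen k l), rearr u s :=
        setLIntegral_le_setLIntegral_rearr hu inter_subset_left
    _ ≤ C * ∫⁻ s in Ioo 0 (levelLen k l), rearr v s := h _ (levelLen_le_one k l)
    _ ≤ C * ∫⁻ x in attainSet v (levelLen k l), v x :=
        mul_le_mul' le_rfl (setLIntegral_rearr_le_setLIntegral_attainSet hv (levelLen_le_one k l))
    _ ≤ C * ∫⁻ x in levelSet v k l, v x :=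
        mul_le_mul' le_rfl (lintegral_mono_set (attainSet_subset_levelSet l))

end TestFunction

section Associate

variable {ρ : (ℝ → ℝ≥0∞) → ℝ≥0∞} {u v : ℝ → ℝ≥0∞}

lemma assoc_mono (h : ∀ t ∈ Ioo (0:ℝ) 1, u t ≤ v t) : assoc ρ u ≤ assoc ρ v :=
  iSup₂_mono fun _ _ => setLIntegral_mono' measurableSet_Ioo fun t ht => mul_le_mul' (h t ht) le_rfl

lemma assoc_congr (h : ∀ t ∈ Ioo (0:ℝ) 1, u t = v t) : assoc ρ u = assoc ρ v :=
  le_antisymm (assoc_mono fun t ht => (h t ht).le) (assoc_mono fun t ht => (h t ht).ge)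

lemma IsRiNorm.rearr_eq (hρ : IsRiNorm ρ) (hu : Measurable u) : ρ (rearr u) = ρ u := by
  obtain ⟨-, -, -, -, -, -, -, hrearr⟩ := hρ
  exact (hrearr u hu).symm

lemma IsRiNorm.le_of_distribution_le (hρ : IsRiNorm ρ) (hu : Measurable u) (hv : Measurable v)
    (h : ∀ l, distribution u l ≤ distribution v l) : ρ u ≤ ρ v := by
  rw [← IsRiNorm.rearr_eq hρ hu, ← IsRiNorm.rearr_eq hρ hv]
  obtain ⟨-, -, -, hmono, -⟩ := hρ
  exact hmono _ _ (measurable_rearr u) (measurable_rearr v)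
    (ae_of_all _ (rearr_le_rearr_of_distribution_le h))

theorem assoc_le_of_rearr_le (hρ : IsRiNorm ρ) (hu : Measurable u)
    (h : ∀ t ∈ Ioo (0:ℝ) 1, rearr u t ≤ v t) : assoc ρ u ≤ assoc ρ v := by
  refine iSup₂_le fun k ⟨hk, hk1⟩ => ?_
  have hk1' : ρ (rearr k) ≤ 1 := (IsRiNorm.rearr_eq hρ hk).trans_le hk1
  calc ∫⁻ t in Ioo 0 1, u t * k t ≤ ∫⁻ t in Ioo 0 1, rearr u t * rearr k t :=
        setLIntegral_mul_le_rearr_mul_rearr hu hk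
    _ ≤ ∫⁻ t in Ioo 0 1, v t * rearr k t :=
        setLIntegral_mono' measurableSet_Ioo fun t ht => mul_le_mul' (h t ht) le_rfl
    _ ≤ assoc ρ v := le_iSup₂_of_le (rearr k) ⟨measurable_rearr k, hk1'⟩ le_rfl

theorem assoc_le_mul_of_lintegral_rearr_le (hρ : IsRiNorm ρ) (hu : Measurable u)
    (hv : Measurable v) {C : ℝ≥0∞} (hC : C ≠ ⊤)
    (h : ∀ e ≤ 1, ∫⁻ s in Ioo 0 e, rearr u s ≤ C * ∫⁻ s in Ioo 0 e, rearr v s) :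
    assoc ρ u ≤ C * assoc ρ v := by
  refine iSup₂_le fun k ⟨hk, hk1⟩ => ?_
  have hΨ : ρ (testFun v k) ≤ 1 :=
    (IsRiNorm.le_of_distribution_le hρ (measurable_testFun hv) hk
      (distribution_testFun_le hv)).trans hk1
  exact (setLIntegral_mul_le_mul_setLIntegral_mul_testFun hu hv hk hC h).trans
    (mul_le_mul' le_rfl (le_iSup₂_of_le (testFun v k) ⟨measurable_testFun hv, hΨ⟩ le_rfl))

end Associate

section AntitonePrimitive

variable {φ : ℝ → ℝ≥0∞}

lemma ofReal_mul_le_setLIntegral (hφ : Antitone φ) (t : ℝ) :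
    ENNReal.ofReal t * φ t ≤ ∫⁻ s in Ioo 0 t, φ s :=
  calc ENNReal.ofReal t * φ t = ∫⁻ _ in Ioo 0 t, φ t := by
        rw [setLIntegral_const, Real.volume_Ioo, sub_zero, mul_comm]
    _ ≤ ∫⁻ s in Ioo 0 t, φ s := setLIntegral_mono' measurableSet_Ioo fun _ hs => hφ hs.2.le

lemma setLIntegral_Ioo_le_add (hφ : Antitone φ) (s u : ℝ) :
    ∫⁻ x in Ioo 0 u, φ x ≤ (∫⁻ x in Ioo 0 s, φ x) + ENNReal.ofReal (u - s) * φ s :=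
  calc ∫⁻ x in Ioo 0 u, φ x ≤ ∫⁻ x in Ioo 0 s ∪ Ico s u, φ x :=
        lintegral_mono_set fun x hx => (lt_or_ge x s).imp (fun h => ⟨hx.1, h⟩) fun h => ⟨h, hx.2⟩
    _ ≤ (∫⁻ x in Ioo 0 s, φ x) + ∫⁻ x in Ico s u, φ x := lintegral_union_le _ _ _
    _ ≤ (∫⁻ x in Ioo 0 s, φ x) + ∫⁻ _ in Ico s u, φ s :=
        add_le_add le_rfl (setLIntegral_mono' measurableSet_Ico fun _ hx => hφ hx.1)
    _ = _ := by rw [setLIntegral_const, Real.volume_Ico, mul_comm]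

lemma ofReal_mul_setLIntegral_le (hφ : Antitone φ) {r u : ℝ} (hr : 0 ≤ r) (hru : r ≤ u) :
    ENNReal.ofReal r * ∫⁻ x in Ioo 0 u, φ x ≤ ENNReal.ofReal u * ∫⁻ x in Ioo 0 r, φ x :=
  calc ENNReal.ofReal r * ∫⁻ x in Ioo 0 u, φ x
      ≤ ENNReal.ofReal r * ((∫⁻ x in Ioo 0 r, φ x) + ENNReal.ofReal (u - r) * φ r) :=
        mul_le_mul' le_rfl (setLIntegral_Ioo_le_add hφ r u)
    _ = ENNReal.ofReal r * (∫⁻ x in Ioo 0 r, φ x)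
          + ENNReal.ofReal (u - r) * (ENNReal.ofReal r * φ r) := by ring
    _ ≤ ENNReal.ofReal r * (∫⁻ x in Ioo 0 r, φ x)
          + ENNReal.ofReal (u - r) * ∫⁻ x in Ioo 0 r, φ x :=
        add_le_add le_rfl (mul_le_mul' le_rfl (ofReal_mul_le_setLIntegral hφ r))
    _ = ENNReal.ofReal u * ∫⁻ x in Ioo 0 r, φ x := by
        rw [← add_mul, ← ENNReal.ofReal_add hr (sub_nonneg.mpr hru), add_sub_cancel]

end AntitonePrimitive

def rightSup (u : ℝ → ℝ≥0∞) (t : ℝ) : ℝ≥0∞ := ⨆ x ∈ Ico t 1, u x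

section RightSup

variable {u : ℝ → ℝ≥0∞}

lemma rightSup_antitone (u : ℝ → ℝ≥0∞) : Antitone (rightSup u) :=
  fun _ _ h => biSup_mono fun _ hx => ⟨h.trans hx.1, hx.2⟩

lemma measurable_rightSup (u : ℝ → ℝ≥0∞) : Measurable (rightSup u) :=
  (rightSup_antitone u).measurable

lemma le_rightSup {t x : ℝ} (htx : t ≤ x) (hx : x < 1) : u x ≤ rightSup u t :=
  le_biSup u ⟨htx, hx⟩

lemma rearr_le_rightSup (u : ℝ → ℝ≥0∞) (t : ℝ) : rearr u t ≤ rightSup u t :=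
  rearr_le_of_forall_le fun _ hx htx => le_rightSup htx hx.2

lemma rearr_rightSup_le (u : ℝ → ℝ≥0∞) (t : ℝ) : rearr (rightSup u) t ≤ rightSup u t :=
  rearr_le_of_forall_le fun _ _ htx => rightSup_antitone u htx

end RightSup

section Operators

variable {I J : ℝ → ℝ} {φ g h : ℝ → ℝ≥0∞} {t : ℝ}

lemma RI_congr (hIJ : ∀ x ∈ Ioo (0:ℝ) 1, I x = J x) (ht : t ∈ Ioo (0:ℝ) 1) :
    RI I φ t = RI J φ t := by
  rw [RI, RI, hIJ t ht]

lemma SI_congr (hIJ : ∀ x ∈ Ioo (0:ℝ) 1, I x = J x) (hgh : rearr g = rearr h)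
    (ht : t ∈ Ioo (0:ℝ) 1) : SI I g t = SI J h t := by
  simp only [SI, hgh, hIJ t ht]
  congr 1
  refine iSup_congr fun s => iSup_congr fun hs => ?_
  rw [hIJ s ⟨hs.1, hs.2.trans_lt ht.2⟩]

lemma measurable_RI (hJ : Monotone J) (φ : ℝ → ℝ≥0∞) : Measurable (RI J φ) :=
  (ENNReal.measurable_ofReal.comp hJ.measurable).inv.mul
    (show Monotone fun t => ∫⁻ s in Ioo 0 t, φ s from
      fun _ _ h => lintegral_mono_set (Ioo_subset_Ioo_right h)).measurable

lemma ofReal_mul_RI (hJt : 0 < J t) : ENNReal.ofReal (J t) * RI J φ t = ∫⁻ s in Ioo 0 t, φ s :=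
  ENNReal.mul_inv_cancel_left (ENNReal.ofReal_pos.mpr hJt).ne' ENNReal.ofReal_ne_top

lemma rearr_le_SI (ht : 0 < t) (hIt : 0 < I t) : rearr g t ≤ SI I g t := by
  have h0 : ENNReal.ofReal (I t) ≠ 0 := (ENNReal.ofReal_pos.mpr hIt).ne'
  calc rearr g t = (ENNReal.ofReal (I t))⁻¹ * (ENNReal.ofReal (I t) * rearr g t) :=
        (ENNReal.inv_mul_cancel_left h0 ENNReal.ofReal_ne_top).symm
    _ ≤ SI I g t := mul_le_mul' le_rfl
        (le_biSup (fun s => ENNReal.ofReal (I s) * rearr g s) ⟨ht, le_rfl⟩)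

theorem SI_RI_le_rightSup (hJ : Monotone J) (hJpos : ∀ x ∈ Ioo (0:ℝ) 1, 0 < J x)
    (ht : t ∈ Ioo (0:ℝ) 1) : SI J (RI J φ) t ≤ rightSup (RI J φ) t := by
  have h0 : ENNReal.ofReal (J t) ≠ 0 := (ENNReal.ofReal_pos.mpr (hJpos t ht)).ne'
  rw [SI, ENNReal.inv_mul_le_iff h0 ENNReal.ofReal_ne_top]
  refine iSup₂_le fun s hs => ?_
  have key : ∀ x ∈ Ico s 1,
      ENNReal.ofReal (J s) * RI J φ x ≤ ENNReal.ofReal (J t) * rightSup (RI J φ) t := by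
    intro x hx
    rcases le_total x t with hxt | htx
    · calc ENNReal.ofReal (J s) * RI J φ x ≤ ENNReal.ofReal (J x) * RI J φ x :=
            mul_le_mul' (ENNReal.ofReal_le_ofReal (hJ hx.1)) le_rfl
        _ = ∫⁻ y in Ioo 0 x, φ y := ofReal_mul_RI (hJpos x ⟨hs.1.trans_le hx.1, hx.2⟩)
        _ ≤ ∫⁻ y in Ioo 0 t, φ y := lintegral_mono_set (Ioo_subset_Ioo_right hxt)
        _ = ENNReal.ofReal (J t) * RI J φ t := (ofReal_mul_RI (hJpos t ht)).symm
        _ ≤ ENNReal.ofReal (J t) * rightSup (RI J φ) t :=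
            mul_le_mul' le_rfl (le_rightSup le_rfl ht.2)
    · exact mul_le_mul' (ENNReal.ofReal_le_ofReal (hJ hs.2)) (le_rightSup htx hx.2)
  calc ENNReal.ofReal (J s) * rearr (RI J φ) s
      ≤ ENNReal.ofReal (J s) * rightSup (RI J φ) s := mul_le_mul' le_rfl (rearr_le_rightSup _ s)
    _ = ⨆ x ∈ Ico s 1, ENNReal.ofReal (J s) * RI J φ x := by
        simp only [rightSup, ENNReal.mul_iSup]
    _ ≤ _ := iSup₂_le key

end Operators

section Quasiconcave

variable {J : ℝ → ℝ} {φ : ℝ → ℝ≥0∞} {e s x : ℝ}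

lemma ofReal_mul_RI_le (hJ : Monotone J) (hφ : Antitone φ) {u : ℝ} (hu : 0 < u) :
    ENNReal.ofReal u * RI J φ u ≤ 4 * ∫⁻ x in Ioo 0 u, RI J φ x := by
  have hu0 : ENNReal.ofReal u ≠ 0 := (ENNReal.ofReal_pos.mpr hu).ne'
  have hhalf : ENNReal.ofReal (u / 2) = ENNReal.ofReal u * 2⁻¹ := by
    rw [ENNReal.ofReal_div_of_pos two_pos, ENNReal.ofReal_ofNat, div_eq_mul_inv]
  have hG : ∀ r ∈ Ioo (u / 2) u, 2⁻¹ * RI J φ u ≤ RI J φ r := by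
    intro r hr
    have hF : 2⁻¹ * ∫⁻ x in Ioo 0 u, φ x ≤ ∫⁻ x in Ioo 0 r, φ x := by
      rw [← ENNReal.mul_le_mul_iff_right hu0 ENNReal.ofReal_ne_top]
      calc ENNReal.ofReal u * (2⁻¹ * ∫⁻ x in Ioo 0 u, φ x)
          = ENNReal.ofReal (u / 2) * ∫⁻ x in Ioo 0 u, φ x := by rw [hhalf]; ring
        _ ≤ ENNReal.ofReal r * ∫⁻ x in Ioo 0 u, φ x :=
            mul_le_mul' (ENNReal.ofReal_le_ofReal hr.1.le) le_rfl
        _ ≤ ENNReal.ofReal u * ∫⁻ x in Ioo 0 r, φ x :=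
            ofReal_mul_setLIntegral_le hφ (by linarith [hr.1]) hr.2.le
    calc 2⁻¹ * RI J φ u = (ENNReal.ofReal (J u))⁻¹ * (2⁻¹ * ∫⁻ x in Ioo 0 u, φ x) := by
          rw [RI]; ring
      _ ≤ RI J φ r :=
          mul_le_mul' (ENNReal.inv_le_inv.mpr (ENNReal.ofReal_le_ofReal (hJ hr.2.le))) hF
  have h4 : (4 : ℝ≥0∞) * 2⁻¹ * 2⁻¹ = 1 := by
    rw [show (4 : ℝ≥0∞) = 2 * 2 by norm_num, mul_assoc 2 2, ENNReal.mul_inv_cancel two_ne_zero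
      ENNReal.ofNat_ne_top, mul_one, ENNReal.mul_inv_cancel two_ne_zero ENNReal.ofNat_ne_top]
  calc ENNReal.ofReal u * RI J φ u = 4 * (ENNReal.ofReal (u / 2) * (2⁻¹ * RI J φ u)) := by
        rw [hhalf, ← one_mul (ENNReal.ofReal u * RI J φ u), ← h4]; ring
    _ = 4 * ∫⁻ _ in Ioo (u / 2) u, 2⁻¹ * RI J φ u := by
        rw [setLIntegral_const, Real.volume_Ioo, mul_comm (ENNReal.ofReal _)]
        ring_nf
    _ ≤ 4 * ∫⁻ x in Ioo 0 u, RI J φ x := mul_le_mul' le_rfl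
        ((setLIntegral_mono' measurableSet_Ioo hG).trans
          (lintegral_mono_set (Ioo_subset_Ioo_left (by linarith))))

lemma RI_le_RI_add (hJ : Monotone J) (hφ : Antitone φ) (hs : 0 ≤ s) (hsx : s ≤ x)
    (hJx : 0 < J x) : RI J φ x ≤ RI J φ s + ENNReal.ofReal (x / J x) * φ s := by
  rw [ENNReal.ofReal_div_of_pos hJx, div_eq_mul_inv]
  calc RI J φ x ≤ (ENNReal.ofReal (J x))⁻¹
        * ((∫⁻ y in Ioo 0 s, φ y) + ENNReal.ofReal (x - s) * φ s) :=
        mul_le_mul' le_rfl (setLIntegral_Ioo_le_add hφ s x)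
    _ = (ENNReal.ofReal (J x))⁻¹ * (∫⁻ y in Ioo 0 s, φ y)
        + ENNReal.ofReal (x - s) * (ENNReal.ofReal (J x))⁻¹ * φ s := by ring
    _ ≤ _ := add_le_add
        (mul_le_mul' (ENNReal.inv_le_inv.mpr (ENNReal.ofReal_le_ofReal (hJ hsx))) le_rfl)
        (mul_le_mul' (mul_le_mul' (ENNReal.ofReal_le_ofReal (by linarith)) le_rfl) le_rfl)

lemma div_le_div_of_antitoneOn (hJpos : ∀ x ∈ Ioo (0:ℝ) 1, 0 < J x)
    (hJratio : AntitoneOn (fun t => J t / t) (Ioo 0 1)) (hx : x ∈ Ioo (0:ℝ) 1)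
    (he : e ∈ Ioo (0:ℝ) 1) (hxe : x ≤ e) : x / J x ≤ e / J e := by
  have h := hJratio hx he hxe
  simp only [div_le_div_iff₀ he.1 hx.1] at h
  rw [div_le_div_iff₀ (hJpos x hx) (hJpos e he)]
  linarith

lemma setLIntegral_RI_le_setLIntegral_rearr (hJ : Monotone J) (φ : ℝ → ℝ≥0∞) (hx : x ≤ 1) :
    ∫⁻ s in Ioo 0 x, RI J φ s ≤ ∫⁻ s in Ioo 0 x, rearr (RI J φ) s := by
  rcases le_total x 0 with h | h
  · simp [Ioo_eq_empty (not_lt.mpr h)]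
  simpa [Real.volume_Ioo, h] using
    setLIntegral_le_setLIntegral_rearr (measurable_RI hJ φ) (Ioo_subset_Ioo_right hx)

lemma ofReal_mul_rightSup_RI_le (hJ : Monotone J) (hφ : Antitone φ) (he : 0 < e) :
    ENNReal.ofReal e * rightSup (RI J φ) e ≤ 4 * ∫⁻ s in Ioo 0 e, rearr (RI J φ) s := by
  simp only [rightSup, ENNReal.mul_iSup]
  refine iSup₂_le fun x hx => ?_
  have hx0 : 0 < x := he.trans_le hx.1
  rw [← ENNReal.mul_le_mul_iff_right (ENNReal.ofReal_pos.mpr hx0).ne' ENNReal.ofReal_ne_top]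
  calc ENNReal.ofReal x * (ENNReal.ofReal e * RI J φ x)
      = ENNReal.ofReal e * (ENNReal.ofReal x * RI J φ x) := by ring
    _ ≤ ENNReal.ofReal e * (4 * ∫⁻ s in Ioo 0 x, rearr (RI J φ) s) := mul_le_mul' le_rfl
        ((ofReal_mul_RI_le hJ hφ hx0).trans
          (mul_le_mul' le_rfl (setLIntegral_RI_le_setLIntegral_rearr hJ φ hx.2.le)))
    _ = 4 * (ENNReal.ofReal e * ∫⁻ s in Ioo 0 x, rearr (RI J φ) s) := by ring
    _ ≤ 4 * (ENNReal.ofReal x * ∫⁻ s in Ioo 0 e, rearr (RI J φ) s) := mul_le_mul' le_rfl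
        (ofReal_mul_setLIntegral_le (rearr_antitone _) he.le hx.1)
    _ = ENNReal.ofReal x * (4 * ∫⁻ s in Ioo 0 e, rearr (RI J φ) s) := by ring

lemma setLIntegral_rightSup_RI_le_of_mem (hJ : Monotone J) (hJpos : ∀ x ∈ Ioo (0:ℝ) 1, 0 < J x)
    (hJratio : AntitoneOn (fun t => J t / t) (Ioo 0 1)) (hφ : Antitone φ)
    (he : e ∈ Ioo (0:ℝ) 1) :
    ∫⁻ s in Ioo 0 e, rightSup (RI J φ) s ≤ 9 * ∫⁻ s in Ioo 0 e, rearr (RI J φ) s := by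
  set G := RI J φ
  set Φ := ∫⁻ s in Ioo 0 e, rearr G s
  have hpt : ∀ s ∈ Ioo 0 e,
      rightSup G s ≤ G s + ENNReal.ofReal (e / J e) * φ s + rightSup G e := by
    intro s hs
    refine iSup₂_le fun x hx => ?_
    rcases lt_or_ge x e with hxe | hex
    · have hxΩ : x ∈ Ioo (0:ℝ) 1 := ⟨hs.1.trans_le hx.1, hx.2⟩
      calc G x ≤ G s + ENNReal.ofReal (x / J x) * φ s :=
            RI_le_RI_add hJ hφ hs.1.le hx.1 (hJpos x hxΩ)
        _ ≤ G s + ENNReal.ofReal (e / J e) * φ s := add_le_add le_rfl (mul_le_mul'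
            (ENNReal.ofReal_le_ofReal (div_le_div_of_antitoneOn hJpos hJratio hxΩ he hxe.le))
            le_rfl)
        _ ≤ _ := le_self_add
    · exact (le_rightSup hex hx.2).trans le_add_self
  have hG : ∫⁻ s in Ioo 0 e, G s ≤ Φ := setLIntegral_RI_le_setLIntegral_rearr hJ φ he.2.le
  have hφ' : ∫⁻ s in Ioo 0 e, ENNReal.ofReal (e / J e) * φ s ≤ 4 * Φ := by
    rw [lintegral_const_mul _ hφ.measurable, ENNReal.ofReal_div_of_pos (hJpos e he),
      div_eq_mul_inv, mul_assoc]
    exact (mul_le_mul' le_rfl (le_rightSup le_rfl he.2)).trans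
      (ofReal_mul_rightSup_RI_le hJ hφ he.1)
  have hsup : ∫⁻ _ in Ioo 0 e, rightSup G e ≤ 4 * Φ := by
    rw [setLIntegral_const, Real.volume_Ioo, sub_zero, mul_comm]
    exact ofReal_mul_rightSup_RI_le hJ hφ he.1
  calc ∫⁻ s in Ioo 0 e, rightSup G s
      ≤ ∫⁻ s in Ioo 0 e, (G s + ENNReal.ofReal (e / J e) * φ s + rightSup G e) :=
        setLIntegral_mono' measurableSet_Ioo hpt
    _ = (∫⁻ s in Ioo 0 e, G s) + (∫⁻ s in Ioo 0 e, ENNReal.ofReal (e / J e) * φ s)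
        + ∫⁻ _ in Ioo 0 e, rightSup G e := by
        rw [lintegral_add_right _ measurable_const,
          lintegral_add_right _ (hφ.measurable.const_mul _)]
    _ ≤ Φ + 4 * Φ + 4 * Φ := add_le_add (add_le_add hG hφ') hsup
    _ = 9 * Φ := by ring

theorem setLIntegral_rightSup_RI_le (hJ : Monotone J) (hJpos : ∀ x ∈ Ioo (0:ℝ) 1, 0 < J x)
    (hJratio : AntitoneOn (fun t => J t / t) (Ioo 0 1)) (hφ : Antitone φ) (he : e ≤ 1) :
    ∫⁻ s in Ioo 0 e, rightSup (RI J φ) s ≤ 9 * ∫⁻ s in Ioo 0 e, rearr (RI J φ) s := by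
  refine setLIntegral_Ioo_le_of_forall_lt fun e' he' => ?_
  rcases le_or_gt e' 0 with h | h
  · simp [Ioo_eq_empty (not_lt.mpr h)]
  exact (setLIntegral_rightSup_RI_le_of_mem hJ hJpos hJratio hφ ⟨h, he'.trans_le he⟩).trans
    (mul_le_mul' le_rfl (lintegral_mono_set (Ioo_subset_Ioo_right he'.le)))

end Quasiconcave

/-- A monotone, hence measurable, version of `I`; only values on `(0,1)` enter the theorem. -/
def monoExtend (I : ℝ → ℝ) (x : ℝ) : ℝ := if x ≤ 0 then 0 else if x < 1 then I x else 1

section MonoExtend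

variable {I : ℝ → ℝ}

lemma monoExtend_eq {x : ℝ} (hx : x ∈ Ioo (0:ℝ) 1) : monoExtend I x = I x := by
  simp [monoExtend, not_le.mpr hx.1, hx.2]

lemma monotone_monoExtend (hmaps : MapsTo I (Ioo 0 1) (Ioo 0 1))
    (hmono : MonotoneOn I (Ioo 0 1)) : Monotone (monoExtend I) := by
  intro x y hxy
  simp only [monoExtend]
  split_ifs
  all_goals first
    | rfl | linarith
    | exact (hmaps ⟨not_le.mp ‹¬y ≤ 0›, ‹y < 1›⟩).1.le
    | exact (hmaps ⟨not_le.mp ‹¬x ≤ 0›, ‹x < 1›⟩).2.le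
    | exact hmono ⟨not_le.mp ‹¬x ≤ 0›, ‹x < 1›⟩ ⟨not_le.mp ‹¬y ≤ 0›, ‹y < 1›⟩ hxy

end MonoExtend

end Rearrangement

open Rearrangement

theorem statement14_general (I : ℝ → ℝ) (hqc : Quasiconcave I)
    (ρ : (ℝ → ℝ≥0∞) → ℝ≥0∞) (hρ : IsRiNorm ρ) :
    ∃ c₁ c₂ : ℝ, 0 < c₁ ∧ 0 < c₂ ∧ ∀ f : ℝ → ℝ≥0∞, Measurable f →
      ENNReal.ofReal c₁ * assoc ρ (RI I (rearr f)) ≤ assoc ρ (SI I (RI I (rearr f))) ∧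
        assoc ρ (SI I (RI I (rearr f))) ≤ ENNReal.ofReal c₂ * assoc ρ (RI I (rearr f)) := by
  obtain ⟨hbij, hmono, hratio, -, -⟩ := hqc
  set J := monoExtend I
  have hIJ : ∀ x ∈ Ioo (0:ℝ) 1, I x = J x := fun x hx => (monoExtend_eq hx).symm
  have hJ : Monotone J := monotone_monoExtend hbij.mapsTo hmono
  have hJpos : ∀ x ∈ Ioo (0:ℝ) 1, 0 < J x := fun x hx => hIJ x hx ▸ (hbij.mapsTo hx).1
  have hJratio : AntitoneOn (fun t => J t / t) (Ioo 0 1) := fun x hx y hy hxy => by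
    simpa only [← hIJ x hx, ← hIJ y hy] using hratio hx hy hxy
  refine ⟨1, 9, one_pos, by norm_num, fun f _ => ?_⟩
  set G := RI J (rearr f)
  have hRI : assoc ρ (RI I (rearr f)) = assoc ρ G := assoc_congr fun t ht => RI_congr hIJ ht
  have hSI : assoc ρ (SI I (RI I (rearr f))) = assoc ρ (SI J G) :=
    assoc_congr fun t ht => SI_congr hIJ (rearr_congr fun x hx => RI_congr hIJ hx) ht
  rw [hRI, hSI, ENNReal.ofReal_one, one_mul, show ENNReal.ofReal 9 = 9 by norm_num]
  constructor
  · exact assoc_le_of_rearr_le hρ (measurable_RI hJ _) fun t ht => rearr_le_SI ht.1 (hJpos t ht)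
  calc assoc ρ (SI J G) ≤ assoc ρ (rightSup G) :=
        assoc_mono fun t ht => SI_RI_le_rightSup hJ hJpos ht
    _ ≤ 9 * assoc ρ G := assoc_le_mul_of_lintegral_rearr_le hρ (measurable_rightSup G)
        (measurable_RI hJ _) ENNReal.ofNat_ne_top fun e he =>
          (setLIntegral_mono' measurableSet_Ioo fun t _ => rearr_rightSup_le G t).trans
            (setLIntegral_rightSup_RI_le hJ hJpos hJratio (rearr_antitone f) he)

/-- Theorem 4.6 / `thm:ZOptimal`.  For quasiconcave `I` satisfying (★) and
an r.i. norm `‖·‖_X`, the associate optimal target norm `‖f‖_{Y_X'} = ‖R_I f^*‖_{X'}`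
satisfies `‖R_I f^*‖_{X'} ≈ ‖S_I (R_I f^*)‖_{X'}`, i.e. `S_I` is bounded on `Z` where
`‖g‖_Z = ‖S_I g‖_{X'}`. -/
theorem statement14 (I : ℝ → ℝ) (hqc : Quasiconcave I) (hstar : StarCond I)
    (ρ : (ℝ → ℝ≥0∞) → ℝ≥0∞) (hρ : IsRiNorm ρ) :
    ∃ c₁ c₂ : ℝ, 0 < c₁ ∧ 0 < c₂ ∧ ∀ f : ℝ → ℝ≥0∞, Measurable f →
      ENNReal.ofReal c₁ * assoc ρ (RI I (rearr f)) ≤ assoc ρ (SI I (RI I (rearr f))) ∧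
        assoc ρ (SI I (RI I (rearr f))) ≤ ENNReal.ofReal c₂ * assoc ρ (RI I (rearr f)) :=
  statement14_general I hqc ρ hρ
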